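/- For every A ⊆ ℕ, the set R(A) is coarsely computable if and only if A is limit computable, i.e. there is a computable function g : ℕ × ℕ → {0,1} such that for every n, g(n,s) = χ_A(n) for all sufficiently large s (equivalently, A ≤_T 0′). -/

import Mathlib

open Filter

open scoped Classical in
/-- `ρ_n(A) = |A ∩ {0,…,n}| / (n+1)`. -/
noncomputable def partialDensity (A : Set ℕ) (n : ℕ) : ℝ :=
  ((Finset.range (n + 1)).filter (· ∈ A)).card / (n + 1)

/-- The upper density of `A`: `limsup_n ρ_n(A)`. -/
noncomputable def upperDensity (A : Set ℕ) : ℝ :=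
  Filter.limsup (partialDensity A) Filter.atTop

/-- `A` has asymptotic density `r`: `ρ_n(A) → r`. -/
def HasDensity (A : Set ℕ) (r : ℝ) : Prop :=
  Filter.Tendsto (partialDensity A) Filter.atTop (nhds r)

open scoped Classical in
/-- The characteristic function of `A` (with values in `{0,1} ⊆ ℕ`). -/
noncomputable def charFun (A : Set ℕ) : ℕ → ℕ := fun n => if n ∈ A then 1 else 0

/-- `Φ` is a generic description of `A`: `Φ(x) = χ_A(x)` whenever `Φ(x)` is defined,
and the domain of `Φ` has density 1. -/
def IsGenericDescription (Φ : ℕ →. ℕ) (A : Set ℕ) : Prop :=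
  (∀ x m, m ∈ Φ x → m = charFun A x) ∧ HasDensity {x | (Φ x).Dom} 1

/-- `A` is generically computable: some partial computable function is a generic
description of `A`. -/
def GenericallyComputable (A : Set ℕ) : Prop :=
  ∃ Φ : ℕ →. ℕ, Partrec Φ ∧ IsGenericDescription Φ A

/-- `A` is computably enumerable: `A` is the domain of a partial computable function. -/
def CE (A : Set ℕ) : Prop :=
  ∃ f : ℕ →. ℕ, Partrec f ∧ A = {x | (f x).Dom}

/-- `A` is a computable set. -/
def ComputableSet (A : Set ℕ) : Prop := ComputablePred (· ∈ A)

/-- `A` is immune: infinite, with no infinite c.e. subset. -/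
def Immune (A : Set ℕ) : Prop :=
  A.Infinite ∧ ∀ W : Set ℕ, CE W → W.Infinite → ¬W ⊆ A

/-- `A` is bi-immune: both `A` and its complement are immune. -/
def BiImmune (A : Set ℕ) : Prop := Immune A ∧ Immune Aᶜ

/-- `A` and `B` are generically similar: their symmetric difference has density 0. -/
def GenericallySimilar (A B : Set ℕ) : Prop := HasDensity (symmDiff A B) 0

/-- `A` is coarsely computable: generically similar to a computable set. -/
def CoarselyComputable (A : Set ℕ) : Prop :=
  ∃ C : Set ℕ, ComputableSet C ∧ GenericallySimilar A C

/-- `R_k = {m : 2^k ∣ m, 2^(k+1) ∤ m}`. -/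
def Rset (k : ℕ) : Set ℕ := {m | 2 ^ k ∣ m ∧ ¬2 ^ (k + 1) ∣ m}

/-- `R(A) = ⋃_{n ∈ A} R_n`. -/
def RofSet (A : Set ℕ) : Set ℕ := ⋃ n ∈ A, Rset n

/-- Partial functions `ℕ →. ℕ` computable relative to a (total) oracle `O : ℕ → ℕ`. -/
inductive RecursiveInOracle (O : ℕ → ℕ) : (ℕ →. ℕ) → Prop
  | zero : RecursiveInOracle O (pure 0)
  | succ : RecursiveInOracle O fun n => Part.some (n + 1)
  | left : RecursiveInOracle O fun n => Part.some (Nat.unpair n).1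
  | right : RecursiveInOracle O fun n => Part.some (Nat.unpair n).2
  | oracle : RecursiveInOracle O fun n => Part.some (O n)
  | pair {f g : ℕ →. ℕ} : RecursiveInOracle O f → RecursiveInOracle O g →
      RecursiveInOracle O fun n => Nat.pair <$> f n <*> g n
  | comp {f g : ℕ →. ℕ} : RecursiveInOracle O f → RecursiveInOracle O g →
      RecursiveInOracle O fun n => g n >>= f
  | prec {f g : ℕ →. ℕ} : RecursiveInOracle O f → RecursiveInOracle O g →
      RecursiveInOracle O (Nat.unpaired fun a n =>
        n.rec (f a) fun y IH => do let i ← IH; g (Nat.pair a (Nat.pair y i)))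
  | rfind {f : ℕ →. ℕ} : RecursiveInOracle O f →
      RecursiveInOracle O fun a => Nat.rfind fun n => (fun m => m = 0) <$> f (Nat.pair a n)

/-- `A ≤_T B`: the characteristic function of `A` is computable relative to `B`. -/
def SetTuringReducible (A B : Set ℕ) : Prop :=
  RecursiveInOracle (charFun B) fun n => Part.some (charFun A n)

/-- `A ≡_T B`. -/
def SetTuringEquivalent (A B : Set ℕ) : Prop :=
  SetTuringReducible A B ∧ SetTuringReducible B A

/-- `A` is limit computable. -/
def LimitComputable (A : Set ℕ) : Prop :=
  ∃ g : ℕ → ℕ → Bool, Computable₂ g ∧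
    ∀ n : ℕ, ∀ᶠ s in Filter.atTop, (g n s = true ↔ n ∈ A)

/-!
Membership of `n` in `A` is coded by the numbers of 2-adic valuation `n`, and `R_n` has positive
density `2⁻⁽ⁿ⁺¹⁾`. If a computable `C` agrees with `R(A)` off a density-zero set, the first `s`
elements of `R_n` lie below `2ⁿ⁺¹ s`, so for large `s` a majority vote of `C` on them decides
`n ∈ A`: this vote is a computable approximation to `A`. Conversely, given an approximation
`g`, put `m ≠ 0` into `C` iff `g (ν₂ m) m`. Then `m ∈ R(A) △ C` only below the stage where the
approximation to `ν₂ m` settles, so off the multiples of `2ᵏ` the symmetric difference is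
finite, and the multiples of `2ᵏ` have density `2⁻ᵏ`.
-/

open Finset
open scoped Classical

theorem mem_Rset_iff {m n : ℕ} : m ∈ Rset n ↔ m ≠ 0 ∧ padicValNat 2 m = n := by
  rcases eq_or_ne m 0 with rfl | hm
  · simp [Rset]
  · simp only [Rset, Set.mem_ofPred_eq, padicValNat_dvd_iff_le hm, ne_eq, hm, not_false_eq_true,
      true_and]
    omega

theorem mem_RofSet_iff {A : Set ℕ} {m : ℕ} : m ∈ RofSet A ↔ m ≠ 0 ∧ padicValNat 2 m ∈ A := by
  simp [RofSet, mem_Rset_iff]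

theorem padicValNat_two_pow_mul_odd (n j : ℕ) : padicValNat 2 (2 ^ n * (2 * j + 1)) = n := by
  rw [padicValNat.mul (by positivity) (by omega), padicValNat.prime_pow,
    padicValNat.eq_zero_of_not_dvd (by omega), add_zero]

theorem two_pow_mul_odd_mem_RofSet_iff {A : Set ℕ} (n j : ℕ) :
    2 ^ n * (2 * j + 1) ∈ RofSet A ↔ n ∈ A := by
  rw [mem_RofSet_iff, padicValNat_two_pow_mul_odd]
  simp

theorem Primrec.nat_pow : Primrec₂ ((· ^ ·) : ℕ → ℕ → ℕ) :=
  Primrec₂.unpaired'.1 Nat.Primrec.pow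

theorem Primrec.nat_dvd : PrimrecRel ((· ∣ ·) : ℕ → ℕ → Prop) :=
  (Primrec.eq.comp (Primrec.nat_mod.comp Primrec.snd Primrec.fst) (Primrec.const 0)).of_eq
    fun _ => Nat.dvd_iff_mod_eq_zero.symm

theorem Computable₂.card_filter_range {α : Type*} [Primcodable α] {f : α → ℕ → Bool}
    (hf : Computable₂ f) : Computable₂ fun a s => #{j ∈ range s | f a j} := by
  have step : Computable₂ fun (p : α × ℕ) (q : ℕ × ℕ) => q.2 + cond (f p.1 q.1) 1 0 :=
    (Primrec.nat_add.to_comp.comp (Computable.snd.comp Computable.snd)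
      (Computable.cond (hf.comp (Computable.fst.comp Computable.fst)
        (Computable.fst.comp Computable.snd)) (Computable.const 1) (Computable.const 0))).to₂
  refine (Computable.nat_rec Computable.snd (Computable.const 0) step).of_eq fun ⟨a, s⟩ => ?_
  induction s with
  | zero => rfl
  | succ s ih =>
    simp only at ih ⊢
    rw [ih, range_add_one, filter_insert]
    cases f a s <;> simp

theorem padicValNat_eq_card_filter_range (p : ℕ) [Fact p.Prime] (m : ℕ) :
    padicValNat p m = #{k ∈ range m | p ^ (k + 1) ∣ m} := by
  rcases eq_or_ne m 0 with rfl | hm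
  · simp
  have hlt : padicValNat p m < m :=
    (Nat.lt_pow_self (Fact.out : p.Prime).one_lt).trans_le
      (Nat.le_of_dvd (Nat.pos_of_ne_zero hm) pow_padicValNat_dvd)
  have : {k ∈ range m | p ^ (k + 1) ∣ m} = range (padicValNat p m) := by
    ext k
    simp only [mem_filter, mem_range, padicValNat_dvd_iff_le hm]
    omega
  rw [this, card_range]

theorem computable_padicValNat (p : ℕ) [Fact p.Prime] : Computable (padicValNat p) := by
  have hdvd : Computable₂ fun (m k : ℕ) => decide (p ^ (k + 1) ∣ m) :=
    (Primrec.nat_dvd.decide.comp (Primrec.nat_pow.comp (Primrec.const p)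
      (Primrec.succ.comp Primrec.snd)) Primrec.fst).to_comp
  refine (hdvd.card_filter_range.comp Computable.id Computable.id).of_eq fun m => ?_
  simp [padicValNat_eq_card_filter_range p m]

theorem card_filter_range_eq_partialDensity_mul (D : Set ℕ) (N : ℕ) :
    (#{m ∈ range (N + 1) | m ∈ D} : ℝ) = partialDensity D N * (N + 1) := by
  rw [partialDensity, div_mul_cancel₀ _ (by positivity)]

theorem partialDensity_nonneg (D : Set ℕ) (N : ℕ) : 0 ≤ partialDensity D N := by
  unfold partialDensity; positivity

theorem partialDensity_le_of_card_le {D : Set ℕ} {N : ℕ} {c : ℝ}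
    (h : (#{m ∈ range (N + 1) | m ∈ D} : ℝ) ≤ c) : partialDensity D N ≤ c / (N + 1) := by
  unfold partialDensity; gcongr

theorem card_filter_dvd_range_le (d N : ℕ) : #{m ∈ range (N + 1) | d ∣ m} ≤ N / d + 1 := by
  rcases Nat.eq_zero_or_pos d with rfl | hd
  · exact (card_le_one.2 fun a ha b hb => by simp_all).trans (by omega)
  calc #{m ∈ range (N + 1) | d ∣ m}
      ≤ #((range (N / d + 1)).image (d * ·)) := by
        refine card_le_card fun m hm => ?_
        obtain ⟨hmN, k, rfl⟩ := by simpa only [mem_filter, mem_range] using hm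
        exact mem_image.2 ⟨k, mem_range.2 (Nat.lt_succ_of_le
          ((Nat.le_div_iff_mul_le hd).2 (by rw [mul_comm]; omega))), rfl⟩
    _ ≤ N / d + 1 := card_image_le.trans (card_range _).le

theorem card_filter_range_le_of_upperBound_diff_dvd {D : Set ℕ} {d S : ℕ}
    (hS : S ∈ upperBounds (D \ {m | d ∣ m})) (N : ℕ) :
    (#{m ∈ range (N + 1) | m ∈ D} : ℝ) ≤ (S + 2 : ℕ) + (N + 1) / d := by
  have hsub : {m ∈ range (N + 1) | m ∈ D} ⊆ range (S + 1) ∪ {m ∈ range (N + 1) | d ∣ m} := by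
    intro m hm
    rw [mem_filter] at hm
    by_cases hdvd : d ∣ m
    · exact mem_union_right _ (mem_filter.2 ⟨hm.1, hdvd⟩)
    · exact mem_union_left _ (mem_range.2 (Nat.lt_succ_of_le (hS ⟨hm.2, hdvd⟩)))
  have hnat : #{m ∈ range (N + 1) | m ∈ D} ≤ S + 1 + (N / d + 1) :=
    (card_le_card hsub).trans ((card_union_le _ _).trans
      (by rw [card_range]; exact Nat.add_le_add_left (card_filter_dvd_range_le _ _) _))
  have hdiv : ((N / d : ℕ) : ℝ) ≤ (N + 1) / d :=
    Nat.cast_div_le.trans (div_le_div_of_nonneg_right (by linarith) d.cast_nonneg)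
  calc (#{m ∈ range (N + 1) | m ∈ D} : ℝ) ≤ (S + 1 + (N / d + 1) : ℕ) := by exact_mod_cast hnat
    _ ≤ (S + 2 : ℕ) + (N + 1) / d := by push_cast; linarith

theorem hasDensity_zero_of_finite_diff_dvd {D : Set ℕ}
    (hD : ∀ k, (D \ {m | 2 ^ k ∣ m}).Finite) : HasDensity D 0 := by
  refine tendsto_order.2 ⟨fun a ha => Eventually.of_forall fun N =>
    ha.trans_le (partialDensity_nonneg D N), fun ε hε => ?_⟩
  obtain ⟨k, hk⟩ := exists_pow_lt_of_lt_one (half_pos hε) one_half_lt_one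
  rw [one_div_pow] at hk
  obtain ⟨S, hS⟩ := (hD k).bddAbove
  have hsmall : ∀ᶠ N : ℕ in atTop, ((S + 2 : ℕ) : ℝ) / (N + 1) < ε / 2 :=
    (tendsto_order.1 ((tendsto_const_div_atTop_nhds_zero_nat ((S + 2 : ℕ) : ℝ)).comp
      (tendsto_add_atTop_nat 1))).2 _ (half_pos hε) |>.mono fun N hN => by simpa using hN
  filter_upwards [hsmall] with N hN
  calc partialDensity D N ≤ ((S + 2 : ℕ) + (N + 1) / 2 ^ k) / (N + 1) := by
        refine partialDensity_le_of_card_le ?_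
        exact_mod_cast card_filter_range_le_of_upperBound_diff_dvd hS N
    _ = ((S + 2 : ℕ) : ℝ) / (N + 1) + 1 / 2 ^ k := by field_simp
    _ < ε := by linarith

theorem HasDensity.eventually_card_filter_comp_lt {D : Set ℕ} (hD : HasDensity D 0)
    {e : ℕ → ℕ} (he : Function.Injective e) {c : ℕ} (hc : ∀ j, e j < c * (j + 1))
    {ε : ℝ} (hε : 0 < ε) : ∀ᶠ s in atTop, (#{j ∈ range s | e j ∈ D} : ℝ) < ε * s := by
  have hc0 : 0 < c := Nat.pos_of_mul_pos_right ((Nat.zero_le _).trans_lt (hc 0))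
  have hscale : Tendsto (fun s => c * s - 1) atTop atTop :=
    (tendsto_sub_atTop_nat 1).comp (tendsto_id.const_mul_atTop' hc0)
  filter_upwards [(tendsto_order.1 (hD.comp hscale)).2 (ε / c) (by positivity),
    eventually_gt_atTop 0] with s hs hs0
  obtain ⟨N, hN⟩ : ∃ N, c * s = N + 1 := ⟨c * s - 1, by have := Nat.mul_pos hc0 hs0; omega⟩
  rw [Function.comp_apply, hN, Nat.add_sub_cancel] at hs
  have hinj : #{j ∈ range s | e j ∈ D} ≤ #{m ∈ range (N + 1) | m ∈ D} := by
    refine card_le_card_of_injOn e (fun j hj => ?_) he.injOn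
    simp only [coe_filter, Set.mem_ofPred_eq, mem_range] at hj ⊢
    exact ⟨hN ▸ (hc j).trans_le (Nat.mul_le_mul_left c hj.1), hj.2⟩
  have hNc : ((N : ℝ) + 1) = c * s := by exact_mod_cast hN.symm
  calc (#{j ∈ range s | e j ∈ D} : ℝ)
      ≤ partialDensity D N * (N + 1) := by
        rw [← card_filter_range_eq_partialDensity_mul]; exact_mod_cast hinj
    _ < ε / c * (N + 1) := by gcongr
    _ = ε * s := by rw [hNc]; field_simp

theorem decide_lt_two_mul_card_filter_eq {s : ℕ} {f : ℕ → Bool} {b : Bool}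
    (h : 2 * #{j ∈ range s | f j ≠ b} < s) : decide (s < 2 * #{j ∈ range s | f j}) = b := by
  have hsplit := card_filter_add_card_filter_not (s := range s) (fun j => f j = true)
  rw [card_range] at hsplit
  cases b <;> simp_all <;> omega

theorem LimitComputable.of_coarselyComputable_RofSet {A : Set ℕ}
    (h : CoarselyComputable (RofSet A)) : LimitComputable A := by
  obtain ⟨C, hC, hsim⟩ := h
  obtain ⟨f, hf, hCf⟩ := ComputablePred.computable_iff.1 hC
  have hmemC (m : ℕ) : m ∈ C ↔ f m = true := iff_of_eq (congrFun hCf m)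
  -- the `j`-th element of `R_n`
  let e (n j : ℕ) : ℕ := 2 ^ n * (2 * j + 1)
  have he : Computable₂ e :=
    (Primrec.nat_mul.comp (Primrec.nat_pow.comp (Primrec.const 2) Primrec.fst)
      (Primrec.succ.comp (Primrec.nat_mul.comp (Primrec.const 2) Primrec.snd))).to_comp
  refine ⟨fun n s => decide (s < 2 * #{j ∈ range s | f (e n j)}), ?_, fun n => ?_⟩
  · exact (Primrec.nat_lt.decide.to_comp.comp Computable.snd
      (Primrec.nat_mul.to_comp.comp (Computable.const 2)
        (hf.comp₂ he).card_filter_range)).to₂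
  have he_inj : Function.Injective (e n) := fun a b hab => by
    have := Nat.eq_of_mul_eq_mul_left (by positivity) hab
    omega
  have he_lt (j : ℕ) : e n j < 2 ^ (n + 1) * (j + 1) := by
    simp only [e, pow_succ, mul_assoc]
    gcongr
    omega
  filter_upwards [hsim.eventually_card_filter_comp_lt he_inj he_lt one_half_pos] with s hs
  have herr : {j ∈ range s | f (e n j) ≠ decide (n ∈ A)} =
      {j ∈ range s | e n j ∈ symmDiff (RofSet A) C} := by
    refine filter_congr fun j _ => ?_
    rw [Set.mem_symmDiff, two_pow_mul_odd_mem_RofSet_iff, hmemC]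
    cases f (e n j) <;> by_cases n ∈ A <;> simp_all
  have hmaj := decide_lt_two_mul_card_filter_eq (b := decide (n ∈ A)) (by
    rw [herr]
    have : (2 * #{j ∈ range s | e n j ∈ symmDiff (RofSet A) C} : ℝ) < s := by linarith
    exact_mod_cast this)
  simpa using hmaj

theorem LimitComputable.coarselyComputable_RofSet {A : Set ℕ} (h : LimitComputable A) :
    CoarselyComputable (RofSet A) := by
  obtain ⟨g, hg, hlim⟩ := h
  choose t ht using fun n => eventually_atTop.1 (hlim n)
  let f (m : ℕ) : Bool := decide (m ≠ 0) && g (padicValNat 2 m) m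
  have hf : Computable f := by
    refine (Primrec.and.to_comp.comp
      (Primrec.not.comp (Primrec.eq.comp Primrec.id (Primrec.const 0)).decide).to_comp
      (hg.comp (computable_padicValNat 2) Computable.id)).of_eq fun m => ?_
    simp [f]
  refine ⟨{m | f m}, ComputablePred.computable_iff.2 ⟨f, hf, rfl⟩,
    hasDensity_zero_of_finite_diff_dvd fun k => ?_⟩
  have hdisagree {m : ℕ} (hm : m ∈ symmDiff (RofSet A) {m | f m}) :
      m ≠ 0 ∧ m < t (padicValNat 2 m) := by
    have hm0 : m ≠ 0 := by rintro rfl; simp [f, Set.mem_symmDiff, mem_RofSet_iff] at hm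
    refine ⟨hm0, lt_of_not_ge fun hmt => ?_⟩
    have := ht _ m hmt
    rw [Set.mem_symmDiff, mem_RofSet_iff] at hm
    simp_all [f]
  refine ((Set.finite_Iio k).biUnion fun n _ => Set.finite_Iio (t n)).subset ?_
  rintro m ⟨hm, hmk⟩
  obtain ⟨hm0, hmt⟩ := hdisagree hm
  simp only [Set.mem_ofPred_eq, padicValNat_dvd_iff_le hm0, not_le] at hmk
  exact Set.mem_biUnion hmk hmt

/-- `R(A)` is coarsely computable iff `A` is limit computable. -/
theorem stmt11 (A : Set ℕ) :
    CoarselyComputable (RofSet A) ↔ LimitComputable A :=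
  ⟨LimitComputable.of_coarselyComputable_RofSet, LimitComputable.coarselyComputable_RofSet⟩
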